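/- Let π be a probability density on (0,∞) of the form π(u) = L(u)e^{−bu} with b ≥ 0 and L uniformly regularly varying at infinity with constants R, u_0, and fix α ∈ (0,1). Define D(x) = ∫_1^∞ e^{−x²/(2v)} v^{−1/2} π(v−1) dv. Then there exist constants c_0 > 0 and x_0 > 0, depending only on R, b, u_0 and α, such that for all x with |x| ≥ x_0: (∫_{u_0+1}^{(u_0+1)/(1−α)} e^{−x²/(2v)} v^{−3/2} π(v−1) dv)/D(x) ≤ c_0·e^{−x²(1−α)/(2(u_0+1)) + |x|(b+1)}·|x|^{3log₂(R) − 1/2}. -/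

import Mathlib

/-!
Iterating the uniform regular variation over dyadic blocks gives a Potter-type bound: for
`u0 ≤ w ≤ y`, `L w` and `L u0` agree up to the factor `R (y/u0)^{log₂ R}`.
On the middle range `v ∈ (u0+1, (u0+1)/(1-α))` the Gaussian factor is at most
`e^{-x²(1-α)/(2(u0+1))}`, `v^{-3/2} ≤ 1` and `π(v-1) ≤ L(v-1)`, so the numerator is at most a
constant times that exponential times `L u0`. For the denominator only the window
`v ∈ [|x|, |x|+1]` is kept: there `e^{-x²/(2v)} ≥ e^{-|x|/2}`, `v^{-1/2} ≥ (|x|+1)^{-1/2}`,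
`e^{-b(v-1)} ≥ e^{-b|x|}`, and the Potter bound gives `L(v-1) ≥ L u0 / (R (|x|/u0)^{log₂ R})`.
The remaining powers of `|x|` are absorbed into `|x|^{3 log₂ R - 1/2}` at the cost of a further
factor `e^{|x|/2}`.
-/

open MeasureTheory ProbabilityTheory Filter Set

noncomputable section

/-- Posterior shrinkage weight `m_x(π)`. -/
def mx (π : ℝ → ℝ) (x : ℝ) : ℝ :=
  (∫ u in Ioi (0:ℝ), u * (1+u) ^ (-(3:ℝ)/2) * Real.exp (x^2/2 * (u/(1+u))) * π u) /
  (∫ u in Ioi (0:ℝ), (1+u) ^ (-(1:ℝ)/2) * Real.exp (x^2/2 * (u/(1+u))) * π u)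

/-- `π` is a probability density on `(0,∞)`. -/
def IsDensity (π : ℝ → ℝ) : Prop :=
  Measurable π ∧ (∀ u, 0 ≤ π u) ∧ (∫ u in Ioi (0:ℝ), π u) = 1

/-- `L` is uniformly regularly varying at infinity with constants `R, u0`. -/
def URV (L : ℝ → ℝ) (R u0 : ℝ) : Prop :=
  0 < R ∧ 0 < u0 ∧
    ∀ a ∈ Icc (1:ℝ) 2, ∀ u, u0 ≤ u → 1/R ≤ L (a*u) / L u ∧ L (a*u) / L u ≤ R

/-- Condition 1 with parameters `b R u0 C' b' K ustar` and `0 < p < n`: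
`π(u) = L(u)e^{-bu}` with `L` uniformly regularly varying at infinity, and
`C'·π(u) ≥ (p/n)^K e^{-b'u}` for `u ≥ ustar`. -/
def Cond1 (π L : ℝ → ℝ) (b R u0 C' b' K ustar p n : ℝ) : Prop :=
  0 ≤ b ∧ 0 < C' ∧ 0 < b' ∧ 0 ≤ K ∧ 1 ≤ ustar ∧
  (∀ u, π u = L u * Real.exp (-b*u)) ∧ URV L R u0 ∧
  (∀ u, ustar ≤ u → (p/n) ^ K * Real.exp (-b'*u) ≤ C' * π u)

/-- Condition 2: `∫_0^1 π ≥ c`. -/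
def Cond2 (π : ℝ → ℝ) (c : ℝ) : Prop :=
  c ≤ ∫ u in Ioc (0:ℝ) 1, π u

/-- Condition 3(C), with `ν = √(log(n/p))` and `s = (p/n)ν²`. -/
def Cond3 (π : ℝ → ℝ) (C p n : ℝ) : Prop :=
  (∫ u in Ioi ((p/n) * Real.sqrt (Real.log (n/p)) ^ 2),
      min u (Real.sqrt (Real.log (n/p)) ^ 3 / Real.sqrt u) * π u) +
    Real.sqrt (Real.log (n/p)) *
      (∫ u in Icc (1:ℝ) (Real.sqrt (Real.log (n/p)) ^ 2), π u / Real.sqrt u)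
  ≤ C * ((p/n) * Real.sqrt (Real.log (n/p)) ^ 2)

/-- Standard normal cumulative distribution function `Φ`. -/
def Phi (x : ℝ) : ℝ := ((gaussianReal 0 1) (Iic x)).toReal

/-- The denominator integral `D(x) = ∫_1^∞ e^{-x²/(2v)} v^{-1/2} π(v-1) dv`. -/
def Dint (π : ℝ → ℝ) (x : ℝ) : ℝ :=
  ∫ v in Ioi (1:ℝ), Real.exp (-x^2/(2*v)) * v ^ (-(1:ℝ)/2) * π (v-1)

theorem rpow_logb_comm {a c : ℝ} (ha : 0 < a) (hc : 0 < c) (b : ℝ) :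
    a ^ Real.logb b c = c ^ Real.logb b a := by
  rw [Real.rpow_def_of_pos ha, Real.rpow_def_of_pos hc, Real.logb, Real.logb]
  ring_nf

namespace URV

variable {L : ℝ → ℝ} {R u0 : ℝ}

theorem mul_le (h : URV L R u0) (hL : ∀ u, 0 < u → 0 < L u) {a u : ℝ} (ha : a ∈ Icc 1 2)
    (hu : u0 ≤ u) : L (a * u) ≤ R * L u ∧ L u ≤ R * L (a * u) := by
  have hLu : 0 < L u := hL u (h.2.1.trans_le hu)
  have hLau : 0 < L (a * u) := hL _ (by nlinarith [ha.1, h.2.1])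
  obtain ⟨hlo, hhi⟩ := h.2.2 a ha u hu
  rw [div_le_iff₀ hLu] at hhi
  rw [div_le_div_iff₀ h.1 hLu, one_mul] at hlo
  exact ⟨hhi, by linarith⟩

theorem one_le (h : URV L R u0) (hL : ∀ u, 0 < u → 0 < L u) : 1 ≤ R := by
  have := (h.mul_le hL ⟨le_rfl, one_le_two⟩ le_rfl).1
  rw [one_mul] at this
  exact (le_mul_iff_one_le_left (hL u0 h.2.1)).mp this

theorem le_pow_mul (h : URV L R u0) (hL : ∀ u, 0 < u → 0 < L u) (k : ℕ) {w : ℝ}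
    (hw : u0 ≤ w) (hwk : w ≤ 2 ^ k * u0) : L w ≤ R ^ k * L u0 ∧ L u0 ≤ R ^ k * L w := by
  induction k generalizing w with
  | zero => simp [le_antisymm (by simpa using hwk) hw]
  | succ k ih =>
    have hR := h.one_le hL
    have hRk : R ^ k ≤ R ^ (k + 1) := pow_le_pow_right₀ hR k.le_succ
    by_cases hc : w ≤ 2 ^ k * u0
    · obtain ⟨hup, hlow⟩ := ih hw hc
      have hLu0 := hL u0 h.2.1
      have hLw := hL w (h.2.1.trans_le hw)
      exact ⟨hup.trans (by gcongr), hlow.trans (by gcongr)⟩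
    set u : ℝ := 2 ^ k * u0
    have hu0u : u0 ≤ u := le_mul_of_one_le_left h.2.1.le (one_le_pow₀ one_le_two)
    have hu : 0 < u := h.2.1.trans_le hu0u
    have ha : w / u ∈ Icc (1 : ℝ) 2 := by
      constructor
      · rw [le_div_iff₀ hu]; linarith
      · rw [div_le_iff₀ hu]; linarith [show (2:ℝ) ^ (k + 1) * u0 = 2 * u by ring]
    obtain ⟨hwu, huw⟩ := h.mul_le hL ha hu0u
    rw [div_mul_cancel₀ w hu.ne'] at hwu huw
    obtain ⟨hup, hlow⟩ := ih hu0u le_rfl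
    constructor
    · calc L w ≤ R * L u := hwu
        _ ≤ R * (R ^ k * L u0) := by gcongr
        _ = R ^ (k + 1) * L u0 := by ring
    · calc L u0 ≤ R ^ k * L u := hlow
        _ ≤ R ^ k * (R * L w) := by gcongr
        _ = R ^ (k + 1) * L w := by ring

theorem le_rpow_mul (h : URV L R u0) (hL : ∀ u, 0 < u → 0 < L u) {w y : ℝ}
    (hw : u0 ≤ w) (hwy : w ≤ y) :
    L w ≤ R * (y / u0) ^ Real.logb 2 R * L u0 ∧
      L u0 ≤ R * (y / u0) ^ Real.logb 2 R * L w := by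
  have hu0 := h.2.1
  have hR := h.one_le hL
  have hy : 1 ≤ y / u0 := by rw [le_div_iff₀ hu0]; linarith
  set k := ⌈Real.logb 2 (y / u0)⌉₊
  have hwk : w ≤ 2 ^ k * u0 := by
    have : y / u0 ≤ 2 ^ k :=
      calc y / u0 = 2 ^ Real.logb 2 (y / u0) :=
            (Real.rpow_logb two_pos (by norm_num) (by positivity)).symm
        _ ≤ 2 ^ (k : ℝ) := Real.rpow_le_rpow_of_exponent_le one_le_two (Nat.le_ceil _)
        _ = 2 ^ k := Real.rpow_natCast 2 k
    rw [div_le_iff₀ hu0] at this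
    linarith
  have hRk : R ^ k ≤ R * (y / u0) ^ Real.logb 2 R :=
    calc R ^ k = R ^ (k : ℝ) := (Real.rpow_natCast R k).symm
      _ ≤ R ^ (Real.logb 2 (y / u0) + 1) := Real.rpow_le_rpow_of_exponent_le hR
          (Nat.ceil_lt_add_one (Real.logb_nonneg one_lt_two hy)).le
      _ = R * (y / u0) ^ Real.logb 2 R := by
          rw [Real.rpow_add_one (by positivity), mul_comm, rpow_logb_comm h.1 (by positivity)]
  obtain ⟨hup, hlow⟩ := h.le_pow_mul hL k hw hwk
  have hLw := hL w (hu0.trans_le hw)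
  exact ⟨hup.trans (by gcongr; exact (hL u0 hu0).le), hlow.trans (by gcongr)⟩

end URV

theorem self_le_exp_half {x : ℝ} (hx : 0 ≤ x) : x ≤ Real.exp (x / 2) := by
  nlinarith [Real.quadratic_le_exp_of_nonneg (by positivity : 0 ≤ x / 2)]

theorem rpow_le_sqrt_two_mul_exp_half {X β : ℝ} (hX : 1 ≤ X) (hβ : 0 ≤ β) :
    X ^ β ≤ √2 * (Real.exp (X / 2) * X ^ (3 * β - 1 / 2) * (X + 1) ^ (-(1:ℝ) / 2)) := by
  have hX0 : 0 < X := by linarith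
  have h2X : 2 ^ (-(1:ℝ) / 2) * X ^ (-(1:ℝ) / 2) ≤ (X + 1) ^ (-(1:ℝ) / 2) := by
    rw [← Real.mul_rpow (by norm_num) hX0.le]
    exact Real.rpow_le_rpow_of_nonpos (by positivity) (by linarith) (by norm_num)
  have hsqrt : √2 * 2 ^ (-(1:ℝ) / 2) = 1 := by
    rw [Real.sqrt_eq_rpow, ← Real.rpow_add two_pos]; norm_num
  have hsplit : X ^ β = X ^ (1 - 2 * β) * (X ^ (3 * β - 1 / 2) * X ^ (-(1:ℝ) / 2)) := by
    rw [← Real.rpow_add hX0, ← Real.rpow_add hX0]; ring_nf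
  have hX1 : X ^ (1 - 2 * β) ≤ Real.exp (X / 2) :=
    calc X ^ (1 - 2 * β) ≤ X ^ (1:ℝ) := Real.rpow_le_rpow_of_exponent_le hX (by linarith)
      _ = X := Real.rpow_one X
      _ ≤ Real.exp (X / 2) := self_le_exp_half hX0.le
  calc X ^ β ≤ Real.exp (X / 2) * (X ^ (3 * β - 1 / 2) * X ^ (-(1:ℝ) / 2)) := by
        rw [hsplit]; gcongr
    _ = √2 * (Real.exp (X / 2) * X ^ (3 * β - 1 / 2) *
          (2 ^ (-(1:ℝ) / 2) * X ^ (-(1:ℝ) / 2))) := by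
        linear_combination (-(Real.exp (X / 2) * X ^ (3 * β - 1 / 2) * X ^ (-(1:ℝ) / 2))) * hsqrt
    _ ≤ √2 * (Real.exp (X / 2) * X ^ (3 * β - 1 / 2) * (X + 1) ^ (-(1:ℝ) / 2)) := by gcongr

theorem setIntegral_Ioo_le_mul {f : ℝ → ℝ} {a b C : ℝ} (hab : a ≤ b)
    (hf : ∀ v ∈ Ioo a b, ‖f v‖ ≤ C) : ∫ v in Ioo a b, f v ≤ C * (b - a) :=
  calc ∫ v in Ioo a b, f v ≤ ‖∫ v in Ioo a b, f v‖ := Real.le_norm_self _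
    _ ≤ C * (volume (Ioo a b)).toReal :=
        norm_setIntegral_le_of_norm_le_const (by simp [Real.volume_Ioo]) hf
    _ = C * (b - a) := by rw [Real.volume_Ioo, ENNReal.toReal_ofReal (by linarith)]

theorem le_setIntegral_of_le_on_Icc {f : ℝ → ℝ} {s : Set ℝ} {c t : ℝ}
    (hs : MeasurableSet s) (hf : IntegrableOn f s) (hf0 : ∀ v ∈ s, 0 ≤ f v)
    (hts : Icc t (t + 1) ⊆ s) (hc : ∀ v ∈ Icc t (t + 1), c ≤ f v) : c ≤ ∫ v in s, f v :=
  calc c = c * (volume (Icc t (t + 1))).toReal := by simp [Real.volume_Icc]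
    _ ≤ ∫ v in Icc t (t + 1), f v :=
        setIntegral_ge_of_const_le_real measurableSet_Icc (by simp [Real.volume_Icc]) hc
          (hf.mono_set hts)
    _ ≤ ∫ v in s, f v :=
        setIntegral_mono_set hf ((ae_restrict_iff' hs).mpr (.of_forall hf0)) hts.eventuallyLE

section Integrand

variable {π L : ℝ → ℝ} {b R u0 : ℝ}

theorem integrand_nonneg (hπ : IsDensity π) (x s : ℝ) {v : ℝ} (hv : 0 ≤ v) :
    0 ≤ Real.exp (-x ^ 2 / (2 * v)) * v ^ s * π (v - 1) :=
  mul_nonneg (mul_nonneg (Real.exp_nonneg _) (Real.rpow_nonneg hv s)) (hπ.2.1 _)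

theorem integrand_le (hb : 0 ≤ b) (hπL : ∀ u, π u = L u * Real.exp (-b * u))
    (hL : ∀ u, 0 < u → 0 < L u) (hURV : URV L R u0) {x s v y : ℝ} (hs : s ≤ 0)
    (hv : v ∈ Icc (u0 + 1) y) :
    Real.exp (-x ^ 2 / (2 * v)) * v ^ s * π (v - 1)
      ≤ Real.exp (-x ^ 2 / (2 * y)) * (R * ((y - 1) / u0) ^ Real.logb 2 R * L u0) := by
  have hu0 := hURV.2.1
  have hv1 : 1 ≤ v := by linarith [hv.1]
  have hexp : Real.exp (-x ^ 2 / (2 * v)) ≤ Real.exp (-x ^ 2 / (2 * y)) := by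
    rw [Real.exp_le_exp, neg_div, neg_div, neg_le_neg_iff]
    exact div_le_div_of_nonneg_left (sq_nonneg x) (by positivity) (by linarith [hv.2])
  have hrpow : v ^ s ≤ 1 := Real.rpow_le_one_of_one_le_of_nonpos hv1 hs
  have hLv : 0 < L (v - 1) := hL _ (by linarith [hv.1])
  have hπ0 : 0 ≤ π (v - 1) := by rw [hπL]; positivity
  have hπ : π (v - 1) ≤ R * ((y - 1) / u0) ^ Real.logb 2 R * L u0 := by
    rw [hπL]
    calc L (v - 1) * Real.exp (-b * (v - 1)) ≤ L (v - 1) := by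
          apply mul_le_of_le_one_right hLv.le
          rw [Real.exp_le_one_iff]
          nlinarith
      _ ≤ _ := (hURV.le_rpow_mul hL (by linarith [hv.1]) (by linarith [hv.2])).1
  calc Real.exp (-x ^ 2 / (2 * v)) * v ^ s * π (v - 1)
      ≤ Real.exp (-x ^ 2 / (2 * y)) * 1 * (R * ((y - 1) / u0) ^ Real.logb 2 R * L u0) := by
        gcongr
    _ = _ := by rw [mul_one]

theorem le_integrand (hb : 0 ≤ b) (hπL : ∀ u, π u = L u * Real.exp (-b * u))
    (hL : ∀ u, 0 < u → 0 < L u) (hURV : URV L R u0) {x s v : ℝ} (hs : s ≤ 0)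
    (hx : u0 + 1 ≤ |x|) (hv : v ∈ Icc |x| (|x| + 1)) :
    Real.exp (-|x| / 2) * (|x| + 1) ^ s *
        (Real.exp (-b * |x|) * L u0 / (R * (|x| / u0) ^ Real.logb 2 R))
      ≤ Real.exp (-x ^ 2 / (2 * v)) * v ^ s * π (v - 1) := by
  have hu0 := hURV.2.1
  have hv0 : 0 < v := by linarith [hv.1]
  have hX : 0 < |x| := by linarith
  have hexp : Real.exp (-|x| / 2) ≤ Real.exp (-x ^ 2 / (2 * v)) := by
    rw [Real.exp_le_exp, neg_div, neg_div, neg_le_neg_iff,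
      div_le_div_iff₀ (by positivity) two_pos, ← sq_abs]
    nlinarith [hv.1]
  have hrpow : (|x| + 1) ^ s ≤ v ^ s := Real.rpow_le_rpow_of_nonpos hv0 hv.2 hs
  have hLu0 := hL u0 hu0
  have hK : 0 < R * (|x| / u0) ^ Real.logb 2 R := by have := hURV.1; positivity
  have hπ : Real.exp (-b * |x|) * L u0 / (R * (|x| / u0) ^ Real.logb 2 R) ≤ π (v - 1) := by
    rw [hπL, div_le_iff₀ hK]
    have hLv := (hURV.le_rpow_mul hL (w := v - 1) (y := |x|)
      (by linarith [hv.1]) (by linarith [hv.2])).2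
    have he : Real.exp (-b * |x|) ≤ Real.exp (-b * (v - 1)) := by
      rw [Real.exp_le_exp]; nlinarith [hv.2]
    calc Real.exp (-b * |x|) * L u0
        ≤ Real.exp (-b * (v - 1)) * (R * (|x| / u0) ^ Real.logb 2 R * L (v - 1)) := by gcongr
      _ = _ := by ring
  have := div_nonneg (by positivity : 0 ≤ Real.exp (-b * |x|) * L u0) hK.le
  gcongr

theorem setIntegral_Ioo_integrand_le (hπ : IsDensity π) (hb : 0 ≤ b)
    (hπL : ∀ u, π u = L u * Real.exp (-b * u)) (hL : ∀ u, 0 < u → 0 < L u)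
    (hURV : URV L R u0) {x s y : ℝ} (hs : s ≤ 0) (hy : u0 + 1 ≤ y) :
    ∫ v in Ioo (u0 + 1) y, Real.exp (-x ^ 2 / (2 * v)) * v ^ s * π (v - 1)
      ≤ (y - (u0 + 1)) * R * ((y - 1) / u0) ^ Real.logb 2 R * L u0 *
          Real.exp (-x ^ 2 / (2 * y)) := by
  have hu0 := hURV.2.1
  calc _ ≤ Real.exp (-x ^ 2 / (2 * y)) * (R * ((y - 1) / u0) ^ Real.logb 2 R * L u0) *
          (y - (u0 + 1)) := by
        refine setIntegral_Ioo_le_mul hy fun v hv => ?_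
        rw [Real.norm_of_nonneg (integrand_nonneg hπ x s (by linarith [hv.1]))]
        exact integrand_le hb hπL hL hURV hs (Ioo_subset_Icc_self hv)
    _ = _ := by ring

theorem le_Dint (hπ : IsDensity π) (hb : 0 ≤ b) (hπL : ∀ u, π u = L u * Real.exp (-b * u))
    (hL : ∀ u, 0 < u → 0 < L u) (hURV : URV L R u0) {x : ℝ} (hx : u0 + 1 ≤ |x|)
    (hDI : IntegrableOn
      (fun v => Real.exp (-x ^ 2 / (2 * v)) * v ^ (-(1:ℝ) / 2) * π (v - 1)) (Ioi 1)) :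
    u0 ^ Real.logb 2 R * L u0 / (√2 * R)
      ≤ Real.exp (|x| * (b + 1)) * |x| ^ (3 * Real.logb 2 R - 1 / 2) * Dint π x := by
  have hu0 := hURV.2.1
  have hD := le_setIntegral_of_le_on_Icc measurableSet_Ioi hDI
    (fun v hv => integrand_nonneg hπ x _ (le_of_lt (lt_trans one_pos hv)))
    (fun v hv => show 1 < v by linarith [hv.1])
    (fun v hv => le_integrand hb hπL hL hURV (by norm_num) hx hv)
  have hX : 1 ≤ |x| := by linarith
  have hR := hURV.1
  have hβ : 0 ≤ Real.logb 2 R := Real.logb_nonneg one_lt_two (hURV.one_le hL)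
  have hLu0 := hL u0 hu0
  have hexp : Real.exp (|x| * (b + 1)) * Real.exp (-|x| / 2) * Real.exp (-b * |x|)
      = Real.exp (|x| / 2) := by
    rw [← Real.exp_add, ← Real.exp_add]; ring_nf
  calc u0 ^ Real.logb 2 R * L u0 / (√2 * R)
      = |x| ^ Real.logb 2 R / √2 *
          (u0 ^ Real.logb 2 R * L u0 / (R * |x| ^ Real.logb 2 R)) := by
        field_simp
    _ ≤ Real.exp (|x| / 2) * |x| ^ (3 * Real.logb 2 R - 1 / 2) * (|x| + 1) ^ (-(1:ℝ) / 2) *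
          (u0 ^ Real.logb 2 R * L u0 / (R * |x| ^ Real.logb 2 R)) := by
        gcongr
        rw [div_le_iff₀' (by positivity)]
        exact rpow_le_sqrt_two_mul_exp_half hX hβ
    _ = Real.exp (|x| * (b + 1)) * |x| ^ (3 * Real.logb 2 R - 1 / 2) *
          (Real.exp (-|x| / 2) * (|x| + 1) ^ (-(1:ℝ) / 2) *
            (Real.exp (-b * |x|) * L u0 / (R * (|x| / u0) ^ Real.logb 2 R))) := by
        rw [Real.div_rpow (by positivity) hu0.le, ← hexp]
        field_simp
    _ ≤ _ := by gcongr; exact hD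

theorem setIntegral_Ioo_div_Dint_le (hπ : IsDensity π) (hb : 0 ≤ b)
    (hπL : ∀ u, π u = L u * Real.exp (-b * u)) (hL : ∀ u, 0 < u → 0 < L u)
    (hURV : URV L R u0) {x y : ℝ} (hy : u0 + 1 ≤ y) (hx : u0 + 1 ≤ |x|) :
    (∫ v in Ioo (u0 + 1) y, Real.exp (-x ^ 2 / (2 * v)) * v ^ (-(3:ℝ) / 2) * π (v - 1)) /
        Dint π x
      ≤ √2 * R ^ 2 * (y - (u0 + 1)) * ((y - 1) / u0) ^ Real.logb 2 R / u0 ^ Real.logb 2 R *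
          Real.exp (-x ^ 2 / (2 * y)) * Real.exp (|x| * (b + 1)) *
          |x| ^ (3 * Real.logb 2 R - 1 / 2) := by
  have hu0 := hURV.2.1
  have hy1 : 0 ≤ (y - 1) / u0 := div_nonneg (by linarith) hu0.le
  by_cases hDI : IntegrableOn
    (fun v => Real.exp (-x ^ 2 / (2 * v)) * v ^ (-(1:ℝ) / 2) * π (v - 1)) (Ioi 1)
  swap
  · rw [Dint, integral_undef hDI, div_zero]
    positivity
  have hD0 : 0 ≤ Dint π x := setIntegral_nonneg measurableSet_Ioi fun v hv =>
    integrand_nonneg hπ x _ (by linarith [mem_Ioi.mp hv])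
  refine div_le_of_le_mul₀ hD0 (by positivity) ?_
  calc _ ≤ _ := setIntegral_Ioo_integrand_le hπ hb hπL hL hURV (by norm_num) hy
    _ = √2 * R ^ 2 * (y - (u0 + 1)) * ((y - 1) / u0) ^ Real.logb 2 R / u0 ^ Real.logb 2 R *
          Real.exp (-x ^ 2 / (2 * y)) * (u0 ^ Real.logb 2 R * L u0 / (√2 * R)) := by
        field_simp
    _ ≤ _ := by
        rw [mul_assoc _ (Real.exp (|x| * (b + 1))), mul_assoc _ (Real.exp (|x| * (b + 1)) * _)]
        gcongr
        exact le_Dint hπ hb hπL hL hURV hx hDI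

end Integrand

/-- bound on the middle part of the numerator integral relative to `D(x)`,
with constants depending only on `R, b, u0, α`. -/
theorem stmt19 (R b u0 α : ℝ) (hb : 0 ≤ b) (hα : α ∈ Ioo (0:ℝ) 1) :
    ∃ c0 > (0:ℝ), ∃ x0 > (0:ℝ), ∀ (π L : ℝ → ℝ),
      IsDensity π →
      (∀ u, π u = L u * Real.exp (-b*u)) →
      (∀ u, 0 < u → 0 < L u) →
      URV L R u0 →
      ∀ x : ℝ, x0 ≤ |x| →
        (∫ v in Ioo (u0+1) ((u0+1)/(1-α)),
            Real.exp (-x^2/(2*v)) * v ^ (-(3:ℝ)/2) * π (v-1)) / Dint π x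
          ≤ c0 * Real.exp (-x^2 * (1-α) / (2*(u0+1)) + |x| * (b+1)) *
              |x| ^ (3 * Real.logb 2 R - 1/2) := by
  obtain ⟨hα0, hα1⟩ := hα
  set M := (u0 + 1) / (1 - α)
  set C := √2 * R ^ 2 * (M - (u0 + 1)) * ((M - 1) / u0) ^ Real.logb 2 R / u0 ^ Real.logb 2 R
  -- `C` is positive only when `URV L R u0` can hold, which is not known before `L` is chosen
  refine ⟨max 1 C, lt_max_of_lt_left one_pos, max (u0 + 1) 1, lt_max_of_lt_right one_pos, ?_⟩
  intro π L hπ hπL hL hURV x hx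
  have hu0 := hURV.2.1
  have hM : u0 + 1 ≤ M := le_div_self (by linarith) (by linarith) (by linarith)
  have hE : -x ^ 2 / (2 * M) = -x ^ 2 * (1 - α) / (2 * (u0 + 1)) := by
    simp only [M]
    field_simp
  calc _ ≤ C * Real.exp (-x ^ 2 / (2 * M)) * Real.exp (|x| * (b + 1)) *
          |x| ^ (3 * Real.logb 2 R - 1 / 2) :=
        setIntegral_Ioo_div_Dint_le hπ hb hπL hL hURV hM (le_of_max_le_left hx)
    _ ≤ _ := by
        rw [hE, Real.exp_add, ← mul_assoc (max 1 C)]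
        gcongr
        exact le_max_right 1 C

end
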